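/- arXiv:0808.0234 — 7 statements merged into one kernel-verified Lean document; each statement's English description precedes it below -/
import Mathlib

section
/- Let p be a non-constant real polynomial of degree d, and let k, m > 0. Then the set R = {x ∈ ℝ : |p(x)| ≤ k and |p'(x)| ≥ m} is a union of at most 2d pairwise disjoint closed intervals. -/
open Polynomial Set Filter

/-!
Let `U = {m ≤ |p'|}`, so that `R = {|p| ≤ k} ∩ U`. Since `m > 0`, `p'` does not vanish on a
connected component `J` of `U`, so `p` is strictly monotone on `J` and `R ∩ J` is an interval.
Hence `R` has at most as many components as `U`. A component of the closed set `U` that is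
bounded below contains its infimum, which lies on the frontier of `U`, where `|p'| = m`; there
are at most `2 (d - 1)` such points, and at most one component is unbounded below. So `R` has at
most `2d - 1` components, and they are compact intervals because `R` is compact.
-/

section Topology

variable {α : Type*} [TopologicalSpace α]

theorem isClosed_connectedComponentIn {F : Set α} (hF : IsClosed F) (x : α) :
    IsClosed (connectedComponentIn F x) := by
  by_cases hx : x ∈ F
  · exact isClosed_of_closure_subset <|
      isPreconnected_connectedComponentIn.closure.subset_connectedComponentIn
      (subset_closure (mem_connectedComponentIn hx))
      (closure_minimal (connectedComponentIn_subset F x) hF)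
  · rw [connectedComponentIn_eq_empty hx]
    exact isClosed_empty

theorem connectedComponentIn_eq_inter_of_isPreconnected {R U : Set α} {x : α} (hRU : R ⊆ U)
    (hx : x ∈ R) (h : IsPreconnected (R ∩ connectedComponentIn U x)) :
    connectedComponentIn R x = R ∩ connectedComponentIn U x :=
  Subset.antisymm
    (subset_inter (connectedComponentIn_subset R x) (connectedComponentIn_mono x hRU))
    (h.subset_connectedComponentIn ⟨hx, mem_connectedComponentIn (hRU hx)⟩ inter_subset_left)

theorem encard_connectedComponentIn_image_le_of_isPreconnected_inter {R U : Set α} (hRU : R ⊆ U)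
    (h : ∀ x ∈ R, IsPreconnected (R ∩ connectedComponentIn U x)) :
    (connectedComponentIn R '' R).encard ≤ (connectedComponentIn U '' U).encard := by
  have hsub : connectedComponentIn R '' R ⊆ (R ∩ ·) '' (connectedComponentIn U '' U) := by
    rintro _ ⟨x, hx, rfl⟩
    exact ⟨_, mem_image_of_mem _ (hRU hx),
      (connectedComponentIn_eq_inter_of_isPreconnected hRU hx (h x hx)).symm⟩
  exact (encard_le_encard hsub).trans (encard_image_le _ _)

end Topology

theorem csInf_connectedComponentIn_mem_frontier {U : Set ℝ} (hU : IsClosed U) {x : ℝ}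
    (hx : x ∈ U) (hbdd : BddBelow (connectedComponentIn U x)) :
    sInf (connectedComponentIn U x) ∈ frontier U := by
  set J := connectedComponentIn U x
  have haJ : sInf J ∈ J :=
    (isClosed_connectedComponentIn hU x).csInf_mem ⟨x, mem_connectedComponentIn hx⟩ hbdd
  refine ⟨subset_closure (connectedComponentIn_subset U x haJ), fun hint => ?_⟩
  obtain ⟨ε, hε, hball⟩ := Metric.mem_nhds_iff.mp (mem_interior_iff_mem_nhds.mp hint)
  have hballJ : Metric.ball (sInf J) ε ⊆ J := by
    have h := (convex_ball _ _).isPreconnected.subset_connectedComponentIn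
      (Metric.mem_ball_self hε) hball
    rwa [← connectedComponentIn_eq haJ] at h
  have hbelow : sInf J - ε / 2 ∈ J :=
    hballJ (by rw [Metric.mem_ball, Real.dist_eq, abs_lt]; constructor <;> linarith)
  linarith [csInf_le hbdd hbelow]

theorem connectedComponentIn_eq_of_not_bddBelow {U : Set ℝ} {x y : ℝ} (hy : y ∈ U)
    (hx' : ¬BddBelow (connectedComponentIn U x)) (hy' : ¬BddBelow (connectedComponentIn U y)) :
    connectedComponentIn U x = connectedComponentIn U y := by
  rw [not_bddBelow_iff] at hx' hy'
  obtain ⟨u, huJx, hu⟩ := hx' y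
  obtain ⟨v, hvJy, hv⟩ := hy' u
  have huJy : u ∈ connectedComponentIn U y :=
    isPreconnected_connectedComponentIn.ordConnected.out hvJy (mem_connectedComponentIn hy)
      ⟨hv.le, hu.le⟩
  exact (connectedComponentIn_eq huJx).trans (connectedComponentIn_eq huJy).symm

theorem encard_connectedComponentIn_image_le_encard_frontier_add_one {U : Set ℝ}
    (hU : IsClosed U) :
    (connectedComponentIn U '' U).encard ≤ (frontier U).encard + 1 := by
  set unbounded := {J ∈ connectedComponentIn U '' U | ¬BddBelow J}
  have hunbounded : unbounded.encard ≤ 1 := by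
    rw [encard_le_one_iff_subsingleton]
    rintro _ ⟨⟨x, -, rfl⟩, hx'⟩ _ ⟨⟨y, hy, rfl⟩, hy'⟩
    exact connectedComponentIn_eq_of_not_bddBelow hy hx' hy'
  have hcover :
      connectedComponentIn U '' U ⊆ connectedComponentIn U '' frontier U ∪ unbounded := by
    rintro _ ⟨x, hx, rfl⟩
    by_cases hbdd : BddBelow (connectedComponentIn U x)
    · have hinf := (isClosed_connectedComponentIn hU x).csInf_mem
        ⟨x, mem_connectedComponentIn hx⟩ hbdd
      exact Or.inl ⟨_, csInf_connectedComponentIn_mem_frontier hU hx hbdd,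
        (connectedComponentIn_eq hinf).symm⟩
    · exact Or.inr ⟨mem_image_of_mem _ hx, hbdd⟩
  calc (connectedComponentIn U '' U).encard
      ≤ (connectedComponentIn U '' frontier U).encard + unbounded.encard :=
        (encard_le_encard hcover).trans (encard_union_le _ _)
    _ ≤ (frontier U).encard + 1 := add_le_add (encard_image_le _ _) hunbounded

theorem IsCompact.exists_eq_iUnion_Icc_of_encard_le {S : Set ℝ} (hS : IsCompact S) {N : ℕ}
    (hN : (connectedComponentIn S '' S).encard ≤ N) :
    ∃ (L : ℕ) (a b : Fin L → ℝ), L ≤ N ∧ (∀ i, a i ≤ b i) ∧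
      (Pairwise fun i j => Disjoint (Icc (a i) (b i)) (Icc (a j) (b j))) ∧
      S = ⋃ i, Icc (a i) (b i) := by
  set C := connectedComponentIn S '' S
  obtain ⟨hCfin, hCcard⟩ := encard_le_coe_iff_finite_ncard_le.mp hN
  have : Finite C := hCfin
  have hIcc : ∀ J : C, (J : Set ℝ) = Icc (sInf (J : Set ℝ)) (sSup (J : Set ℝ)) := by
    rintro ⟨_, x, hx, rfl⟩
    exact eq_Icc_of_connected_compact (isConnected_connectedComponentIn_iff.mpr hx)
      (hS.of_isClosed_subset (isClosed_connectedComponentIn hS.isClosed x)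
        (connectedComponentIn_subset S x))
  have hne : ∀ J : C, (J : Set ℝ).Nonempty := by
    rintro ⟨_, x, hx, rfl⟩
    exact ⟨x, mem_connectedComponentIn hx⟩
  have hcomp : ∀ J : C, ∀ z ∈ (J : Set ℝ), connectedComponentIn S z = J := by
    intro J z hz
    obtain ⟨x, -, hx⟩ := J.2
    rw [← hx] at hz ⊢
    exact (connectedComponentIn_eq hz).symm
  let e : Fin (Nat.card C) ≃ C := (Finite.equivFin C).symm
  refine ⟨Nat.card C, fun i => sInf (e i : Set ℝ), fun i => sSup (e i : Set ℝ),
    (Nat.card_coe_set_eq C).trans_le hCcard, fun i => nonempty_Icc.mp (hIcc (e i) ▸ hne (e i)),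
    fun i j hij => ?_, ?_⟩
  · dsimp only
    rw [← hIcc, ← hIcc, Set.disjoint_left]
    intro z hzi hzj
    exact hij (e.injective (Subtype.ext ((hcomp _ z hzi).symm.trans (hcomp _ z hzj))))
  · ext z
    simp only [mem_iUnion, ← hIcc]
    constructor
    · intro hz
      exact ⟨e.symm ⟨_, z, hz, rfl⟩, by
        rw [e.apply_symm_apply]; exact mem_connectedComponentIn hz⟩
    · rintro ⟨i, hi⟩
      obtain ⟨x, -, hx⟩ := (e i).2
      rw [← hx] at hi
      exact connectedComponentIn_subset S x hi

theorem strictMonoOn_or_strictAntiOn_of_hasDerivAt_ne_zero {D : Set ℝ} (hD : Convex ℝ D)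
    {f f' : ℝ → ℝ} (hf : ∀ x ∈ D, HasDerivAt f (f' x) x) (hf' : ∀ x ∈ D, f' x ≠ 0) :
    StrictMonoOn f D ∨ StrictAntiOn f D := by
  have hcont : ContinuousOn f D := fun x hx => (hf x hx).continuousAt.continuousWithinAt
  have hderiv : ∀ x ∈ interior D, HasDerivWithinAt f (f' x) (interior D) x :=
    fun x hx => (hf x (interior_subset hx)).hasDerivWithinAt
  rcases hasDerivWithinAt_forall_lt_or_forall_gt_of_forall_ne hD
    (fun x hx => (hf x hx).hasDerivWithinAt) hf' with hneg | hpos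
  · exact Or.inr (strictAntiOn_of_hasDerivWithinAt_neg hD hcont hderiv
      fun x hx => hneg x (interior_subset hx))
  · exact Or.inl (strictMonoOn_of_hasDerivWithinAt_pos hD hcont hderiv
      fun x hx => hpos x (interior_subset hx))

theorem Set.OrdConnected.inter_preimage_of_monotoneOn_or_antitoneOn {α β : Type*}
    [Preorder α] [Preorder β] {s : Set α} {t : Set β} {f : α → β} (hs : s.OrdConnected)
    (ht : t.OrdConnected) (hf : MonotoneOn f s ∨ AntitoneOn f s) :
    (s ∩ f ⁻¹' t).OrdConnected := by
  refine ⟨fun x hx y hy z hz => ⟨hs.out hx.1 hy.1 hz, ?_⟩⟩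
  have hzs : z ∈ s := hs.out hx.1 hy.1 hz
  rcases hf with hmono | hanti
  · exact ht.out hx.2 hy.2 ⟨hmono hx.1 hzs hz.1, hmono hzs hy.1 hz.2⟩
  · exact ht.out hy.2 hx.2 ⟨hanti hzs hy.1 hz.2, hanti hx.1 hzs hz.1⟩

namespace Polynomial

theorem isCompact_setOf_abs_eval_le {p : ℝ[X]} (hp : 0 < p.degree) (k : ℝ) :
    IsCompact {x | |p.eval x| ≤ k} := by
  have htend : Tendsto (fun x => ‖p.eval x‖) (cocompact ℝ) atTop :=
    p.tendsto_norm_atTop hp tendsto_norm_cocompact_atTop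
  obtain ⟨K, hK, hKc⟩ := mem_cocompact.mp (htend.eventually_gt_atTop k)
  refine hK.of_isClosed_subset (isClosed_le (by fun_prop) continuous_const) fun x hx => ?_
  by_contra hxK
  have hgt : k < |p.eval x| := hKc hxK
  exact hgt.not_ge hx

theorem encard_setOf_eval_eq_le {R : Type*} [CommRing R] [IsDomain R] {p : R[X]}
    (hp : 0 < p.natDegree) (c : R) : {x | p.eval x = c}.encard ≤ p.natDegree := by
  classical
  have hne : p - C c ≠ 0 := fun h => by
    have := congrArg natDegree h
    rw [natDegree_sub_C, natDegree_zero] at this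
    omega
  have hset : {x | p.eval x = c} = ↑(p - C c).roots.toFinset := by
    ext x
    simp [mem_roots hne, sub_eq_zero]
  rw [hset, encard_coe_eq_coe_finsetCard, Nat.cast_le]
  calc (p - C c).roots.toFinset.card ≤ Multiset.card (p - C c).roots :=
        Multiset.toFinset_card_le _
    _ ≤ (p - C c).natDegree := card_roots' _
    _ = p.natDegree := natDegree_sub_C

theorem encard_frontier_setOf_le_abs_eval_le (p : ℝ[X]) (m : ℝ) :
    (frontier {x | m ≤ |p.eval x|}).encard ≤ 2 * p.natDegree := by
  rcases Nat.eq_zero_or_pos p.natDegree with hp | hp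
  · rw [eq_C_of_natDegree_eq_zero hp]
    by_cases h : m ≤ |p.coeff 0| <;> simp [h]
  have hfrontier : frontier {x | m ≤ |p.eval x|} ⊆ {x | p.eval x = m} ∪ {x | p.eval x = -m} :=
    fun x hx => (eq_or_eq_neg_of_abs_eq
      (frontier_le_subset_eq continuous_const (by fun_prop) hx).symm)
  calc (frontier {x | m ≤ |p.eval x|}).encard
      ≤ {x | p.eval x = m}.encard + {x | p.eval x = -m}.encard :=
        (encard_le_encard hfrontier).trans (encard_union_le _ _)
    _ ≤ p.natDegree + p.natDegree :=
        add_le_add (encard_setOf_eval_eq_le hp m) (encard_setOf_eval_eq_le hp (-m))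
    _ = 2 * p.natDegree := by ring

theorem ordConnected_setOf_abs_eval_le_inter_connectedComponentIn (p : ℝ[X]) {m : ℝ}
    (hm : 0 < m) (k x : ℝ) :
    ({y | |p.eval y| ≤ k} ∩ {y | m ≤ |p.derivative.eval y|} ∩
      connectedComponentIn {y | m ≤ |p.derivative.eval y|} x).OrdConnected := by
  set U := {y | m ≤ |p.derivative.eval y|}
  set J := connectedComponentIn U x
  have hJ : J.OrdConnected := isPreconnected_connectedComponentIn.ordConnected
  have hmono := strictMonoOn_or_strictAntiOn_of_hasDerivAt_ne_zero hJ.convex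
    (fun y _ => p.hasDerivAt y) fun y hy h0 => by
      have hyU : y ∈ U := connectedComponentIn_subset U x hy
      simp only [U, mem_ofPred_eq, h0, abs_zero] at hyU
      linarith
  have hRJ : {y | |p.eval y| ≤ k} ∩ U ∩ J = J ∩ (fun y => p.eval y) ⁻¹' Icc (-k) k := by
    ext y
    simp only [mem_inter_iff, mem_ofPred_eq, mem_preimage, mem_Icc, ← abs_le]
    exact ⟨fun h => ⟨h.2, h.1.1⟩,
      fun h => ⟨⟨h.2, connectedComponentIn_subset U x h.1⟩, h.1⟩⟩
  rw [hRJ]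
  exact hJ.inter_preimage_of_monotoneOn_or_antitoneOn ordConnected_Icc
    (hmono.imp StrictMonoOn.monotoneOn StrictAntiOn.antitoneOn)

end Polynomial

theorem stmt_0_general (p : Polynomial ℝ) (hp : 0 < p.natDegree) (k m : ℝ) (hm : 0 < m) :
    ∃ (L : ℕ) (a b : Fin L → ℝ), L ≤ 2 * p.natDegree ∧
      (∀ i, a i ≤ b i) ∧
      (Pairwise fun i j => Disjoint (Icc (a i) (b i)) (Icc (a j) (b j))) ∧
      {x : ℝ | |p.eval x| ≤ k ∧ m ≤ |p.derivative.eval x|} = ⋃ i, Icc (a i) (b i) := by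
  set U := {x : ℝ | m ≤ |p.derivative.eval x|}
  set R := {x : ℝ | |p.eval x| ≤ k} ∩ U
  have hU : IsClosed U := isClosed_le continuous_const (by fun_prop)
  have hR : IsCompact R :=
    (isCompact_setOf_abs_eval_le (natDegree_pos_iff_degree_pos.mp hp) k).inter_right hU
  have hpieces : ∀ x ∈ R, IsPreconnected (R ∩ connectedComponentIn U x) := fun x _ =>
    (p.ordConnected_setOf_abs_eval_le_inter_connectedComponentIn hm k x).isPreconnected
  refine hR.exists_eq_iUnion_Icc_of_encard_le ?_
  have hdeg : 2 * p.derivative.natDegree + 1 ≤ 2 * p.natDegree := by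
    have := natDegree_derivative_lt hp.ne'
    omega
  calc (connectedComponentIn R '' R).encard
      ≤ (connectedComponentIn U '' U).encard :=
        encard_connectedComponentIn_image_le_of_isPreconnected_inter inter_subset_right hpieces
    _ ≤ (frontier U).encard + 1 :=
        encard_connectedComponentIn_image_le_encard_frontier_add_one hU
    _ ≤ 2 * p.derivative.natDegree + 1 := by
        gcongr
        exact p.derivative.encard_frontier_setOf_le_abs_eval_le m
    _ ≤ 2 * p.natDegree := by exact_mod_cast hdeg

/-- The set `R = {x : |p(x)| ≤ k, |p'(x)| ≥ m}` for a non-constant real polynomial `p`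
of degree `d` is a union of at most `2d` pairwise disjoint closed intervals. -/
theorem stmt_0 (p : Polynomial ℝ) (hp : 0 < p.natDegree) (k m : ℝ) (hk : 0 < k) (hm : 0 < m) :
    ∃ (L : ℕ) (a b : Fin L → ℝ), L ≤ 2 * p.natDegree ∧
      (∀ i, a i ≤ b i) ∧
      (Pairwise fun i j => Disjoint (Icc (a i) (b i)) (Icc (a j) (b j))) ∧
      {x : ℝ | |p.eval x| ≤ k ∧ m ≤ |p.derivative.eval x|} = ⋃ i, Icc (a i) (b i) :=
  stmt_0_general p hp k m hm
end

section
/- Between any two disjoint maximal intervals [a,b] and [c,d] (with b < c) of the set {x : |p(x)| ≤ k and |p'(x)| ≥ m}, there exists a point x₀ ∈ [b,c] with p'(x₀) = 0 or p''(x₀) = 0. -/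
open Polynomial Set

/-- A continuous function with no zero on `[b,c]` has constant sign there. -/
lemma sign_const_aux {g : ℝ → ℝ} (hg : Continuous g) {b c : ℝ} (hbc : b ≤ c)
    (h0 : ∀ x ∈ Icc b c, g x ≠ 0) :
    (∀ x ∈ Icc b c, 0 < g x) ∨ (∀ x ∈ Icc b c, g x < 0) := by
  rcases lt_or_gt_of_ne (h0 b ⟨le_rfl, hbc⟩) with hb | hb
  · right
    intro x hx
    by_contra h
    push_neg at h
    have h0x : (0 : ℝ) ∈ uIcc (g b) (g x) := by
      rw [Set.mem_uIcc]; left; exact ⟨le_of_lt hb, h⟩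
    obtain ⟨y, hy, hy0⟩ := intermediate_value_uIcc (hg.continuousOn) h0x
    have huIcc : uIcc b x = Icc b x := Set.uIcc_of_le hx.1
    rw [huIcc] at hy
    exact h0 y ⟨hy.1, le_trans hy.2 hx.2⟩ hy0
  · left
    intro x hx
    by_contra h
    push_neg at h
    have h0x : (0 : ℝ) ∈ uIcc (g b) (g x) := by
      rw [Set.mem_uIcc]; right; exact ⟨h, le_of_lt hb⟩
    obtain ⟨y, hy, hy0⟩ := intermediate_value_uIcc (hg.continuousOn) h0x
    have huIcc : uIcc b x = Icc b x := Set.uIcc_of_le hx.1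
    rw [huIcc] at hy
    exact h0 y ⟨hy.1, le_trans hy.2 hx.2⟩ hy0

/-- If `q'` has no zero on `[b,c]`, then `q` takes values between its endpoint values. -/
lemma poly_between_aux (q : Polynomial ℝ) {b c : ℝ} (hbc : b ≤ c)
    (h0 : ∀ x ∈ Icc b c, q.derivative.eval x ≠ 0) :
    ∀ x ∈ Icc b c, q.eval x ∈ uIcc (q.eval b) (q.eval c) := by
  have hder : ∀ x, deriv (fun y => q.eval y) x = q.derivative.eval x := fun x =>
    Polynomial.deriv q
  rcases sign_const_aux q.derivative.continuous hbc h0 with hpos | hneg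
  · have hmono : StrictMonoOn (fun y => q.eval y) (Icc b c) := by
      apply strictMonoOn_of_deriv_pos (convex_Icc b c) q.continuous.continuousOn
      intro x hx
      rw [interior_Icc] at hx
      rw [hder]
      exact hpos x ⟨le_of_lt hx.1, le_of_lt hx.2⟩
    intro x hx
    rw [Set.mem_uIcc]
    left
    exact ⟨hmono.monotoneOn ⟨le_rfl, hbc⟩ hx hx.1, hmono.monotoneOn hx ⟨hbc, le_rfl⟩ hx.2⟩
  · have hmono : StrictAntiOn (fun y => q.eval y) (Icc b c) := by
      apply strictAntiOn_of_deriv_neg (convex_Icc b c) q.continuous.continuousOn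
      intro x hx
      rw [interior_Icc] at hx
      rw [hder]
      exact hneg x ⟨le_of_lt hx.1, le_of_lt hx.2⟩
    intro x hx
    rw [Set.mem_uIcc]
    right
    exact ⟨hmono.antitoneOn hx ⟨hbc, le_rfl⟩ hx.2, hmono.antitoneOn ⟨le_rfl, hbc⟩ hx hx.1⟩

/-- Between any two disjoint maximal intervals `[a,b]` and `[c,d]` (with `b < c`) of the set
`{x : |p(x)| ≤ k ∧ |p'(x)| ≥ m}`, there is a point `x₀ ∈ [b,c]` where `p'` or `p''` vanishes. -/
theorem stmt_1 (p : Polynomial ℝ) (hp : 0 < p.natDegree) (k m : ℝ) (hk : 0 < k) (hm : 0 < m)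
    (R : Set ℝ) (hR : R = {x : ℝ | |p.eval x| ≤ k ∧ m ≤ |p.derivative.eval x|})
    (a b c d : ℝ) (hab : a ≤ b) (hcd : c ≤ d) (hbc : b < c)
    (hcomp₁ : ∀ x ∈ Icc a b, connectedComponentIn R x = Icc a b)
    (hmem₁ : Icc a b ⊆ R)
    (hcomp₂ : ∀ x ∈ Icc c d, connectedComponentIn R x = Icc c d)
    (hmem₂ : Icc c d ⊆ R) :
    ∃ x₀ ∈ Icc b c,
      p.derivative.eval x₀ = 0 ∨ p.derivative.derivative.eval x₀ = 0 := by
  by_contra hcon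
  push_neg at hcon
  have hbc' : b ≤ c := le_of_lt hbc
  have hbR : b ∈ R := hmem₁ ⟨hab, le_refl b⟩
  have hcR : c ∈ R := hmem₂ ⟨le_refl c, hcd⟩
  rw [hR] at hbR hcR
  obtain ⟨hpb, hpb'⟩ := hbR
  obtain ⟨hpc, hpc'⟩ := hcR
  -- p between its endpoint values on [b,c]
  have hP : ∀ x ∈ Icc b c, p.eval x ∈ uIcc (p.eval b) (p.eval c) :=
    poly_between_aux p hbc' (fun x hx => (hcon x hx).1)
  -- p' between its endpoint values on [b,c]
  have hP' : ∀ x ∈ Icc b c, p.derivative.eval x ∈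
      uIcc (p.derivative.eval b) (p.derivative.eval c) :=
    poly_between_aux p.derivative hbc' (fun x hx => (hcon x hx).2)
  -- |p x| ≤ k on [b,c]
  have habs : ∀ x ∈ Icc b c, |p.eval x| ≤ k := by
    intro x hx
    have := hP x hx
    rw [Set.mem_uIcc] at this
    rw [abs_le] at hpb hpc ⊢
    rcases this with ⟨h1, h2⟩ | ⟨h1, h2⟩ <;> constructor <;> linarith [hpb.1, hpb.2, hpc.1, hpc.2]
  -- m ≤ |p' x| on [b,c]
  have habs' : ∀ x ∈ Icc b c, m ≤ |p.derivative.eval x| := by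
    rcases sign_const_aux p.derivative.continuous hbc' (fun x hx => (hcon x hx).1)
        with hpos | hneg
    · intro x hx
      have hxpos := hpos x hx
      have hb0 := hpos b ⟨le_rfl, hbc'⟩
      have hc0 := hpos c ⟨hbc', le_rfl⟩
      rw [abs_of_pos hb0] at hpb'
      rw [abs_of_pos hc0] at hpc'
      have := hP' x hx
      rw [Set.mem_uIcc] at this
      rw [abs_of_pos hxpos]
      rcases this with ⟨h1, _⟩ | ⟨h1, _⟩ <;> linarith
    · intro x hx
      have hxneg := hneg x hx
      have hb0 := hneg b ⟨le_rfl, hbc'⟩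
      have hc0 := hneg c ⟨hbc', le_rfl⟩
      rw [abs_of_neg hb0] at hpb'
      rw [abs_of_neg hc0] at hpc'
      have := hP' x hx
      rw [Set.mem_uIcc] at this
      rw [abs_of_neg hxneg]
      rcases this with ⟨_, h2⟩ | ⟨_, h2⟩ <;> linarith
  -- hence [b,c] ⊆ R, so [a,c] ⊆ R
  have hsub : Icc b c ⊆ R := by
    intro x hx
    rw [hR]
    exact ⟨habs x hx, habs' x hx⟩
  have hac : Icc a c ⊆ R := by
    intro x hx
    rcases le_total x b with h | h
    · exact hmem₁ ⟨hx.1, h⟩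
    · exact hsub ⟨h, hx.2⟩
  -- Icc a c is connected, contains b, so ⊆ component of b = Icc a b; contradiction since c > b
  have hbmem : b ∈ Icc a c := ⟨hab, hbc'⟩
  have hconn : IsPreconnected (Icc a c) := isPreconnected_Icc
  have := hconn.subset_connectedComponentIn hbmem hac
  rw [hcomp₁ b ⟨hab, le_rfl⟩] at this
  have hcmem : c ∈ Icc a b := this ⟨le_trans hab hbc', le_rfl⟩
  exact absurd hcmem.2 (not_le_of_gt hbc)
end

section
/- Let f be a nonzero polynomial in N variables with complex coefficients and no constant term, and let h₁,...,h_M be i.i.d. standard complex Gaussian random variables. Then there exist constants A > 0, B > 0, d > 0, δ > 0 (independent of k) such that for all k ≥ δ, P(|f(h₁,...,h_M)|² > k) ≤ A·exp(−B·k^(1/d)). -/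
/-!
Each `h i` is a standard complex Gaussian, so `P(‖h i‖ ≥ t) ≤ 4 exp(-t²/4)`, and a union bound
gives `M` times this for the sup norm of `h`. A polynomial grows at most like `(C (1 + ‖x‖))^n`,
so `‖f(h)‖² > k` forces `‖h‖ ≥ k^(1/2n)/C - 1`, and since `(u - 1)²/4 ≥ u - 2` the Gaussian tail
at that radius is at most `e² exp(-k^(1/2n)/C)`.
-/

open MeasureTheory ProbabilityTheory

/-- The standard circularly-symmetric complex Gaussian distribution `CN(0,1)`:
real and imaginary parts are independent real Gaussians of variance `1/2`. -/
noncomputable def stdComplexGaussian : Measure ℂ :=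
  Measure.map Complex.measurableEquivRealProd.symm
    ((gaussianReal 0 (1/2)).prod (gaussianReal 0 (1/2)))

open Real Set

namespace MvPolynomial

variable {σ R : Type*} [Fintype σ] [NormedCommRing R] [NormOneClass R]

theorem norm_eval_le_sum_norm_coeff_mul (f : MvPolynomial σ R) (x : σ → R) :
    ‖eval x f‖ ≤ (∑ s ∈ f.support, ‖coeff s f‖) * (1 + ‖x‖) ^ f.totalDegree := by
  have hx : ∀ i, ‖x i‖ ≤ 1 + ‖x‖ := fun i =>
    (norm_le_pi_norm x i).trans (le_add_of_nonneg_left zero_le_one)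
  have hx1 : 1 ≤ 1 + ‖x‖ := le_add_of_nonneg_right (norm_nonneg x)
  rw [eval_eq, Finset.sum_mul]
  refine (norm_sum_le _ _).trans (Finset.sum_le_sum fun s hs => ?_)
  refine (norm_mul_le _ _).trans (mul_le_mul_of_nonneg_left ?_ (norm_nonneg _))
  calc ‖∏ i ∈ s.support, x i ^ s i‖
      ≤ ∏ i ∈ s.support, ‖x i‖ ^ s i :=
        (Finset.norm_prod_le _ _).trans
          (Finset.prod_le_prod (fun _ _ => norm_nonneg _) fun _ _ => norm_pow_le _ _)
    _ ≤ ∏ i ∈ s.support, (1 + ‖x‖) ^ s i :=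
        Finset.prod_le_prod (fun _ _ => by positivity) fun i _ =>
          pow_le_pow_left₀ (norm_nonneg _) (hx i) _
    _ = (1 + ‖x‖) ^ (∑ i ∈ s.support, s i) := Finset.prod_pow_eq_pow_sum _ _ _
    _ ≤ (1 + ‖x‖) ^ f.totalDegree := pow_le_pow_right₀ hx1 (le_totalDegree hs)

theorem exists_norm_eval_le_pow (f : MvPolynomial σ R) :
    ∃ C > 0, ∃ n : ℕ, n ≠ 0 ∧ ∀ x : σ → R, ‖eval x f‖ ≤ (C * (1 + ‖x‖)) ^ n := by
  set C := ∑ s ∈ f.support, ‖coeff s f‖ + 1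
  have hC : 1 ≤ C := le_add_of_nonneg_left (Finset.sum_nonneg fun _ _ => norm_nonneg _)
  refine ⟨C, by positivity, f.totalDegree + 1, by omega, fun x => ?_⟩
  calc ‖eval x f‖ ≤ (∑ s ∈ f.support, ‖coeff s f‖) * (1 + ‖x‖) ^ f.totalDegree :=
        norm_eval_le_sum_norm_coeff_mul f x
    _ ≤ C ^ (f.totalDegree + 1) * (1 + ‖x‖) ^ (f.totalDegree + 1) := by
        gcongr
        · exact (le_add_of_nonneg_right zero_le_one).trans (le_self_pow₀ hC (by omega))
        · exact le_add_of_nonneg_right (norm_nonneg x)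
        · omega
    _ = (C * (1 + ‖x‖)) ^ (f.totalDegree + 1) := (mul_pow _ _ _).symm

end MvPolynomial

theorem hasSubgaussianMGF_gaussianReal (v : NNReal) :
    HasSubgaussianMGF (fun x => x) v (gaussianReal 0 v) where
  integrable_exp_mul := integrable_exp_mul_gaussianReal
  mgf_le t := by simp [mgf_fun_id_gaussianReal]

theorem gaussianReal_abs_ge_le (v : NNReal) {ε : ℝ} (hε : 0 ≤ ε) :
    (gaussianReal 0 v).real {x | ε ≤ |x|} ≤ 2 * exp (-ε ^ 2 / (2 * v)) := by
  have hsplit : {x : ℝ | ε ≤ |x|} = {x | ε ≤ x} ∪ {x | ε ≤ -x} := by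
    ext x; simp [le_abs', le_neg, or_comm]
  rw [hsplit, two_mul]
  exact (measureReal_union_le _ _).trans (add_le_add
    ((hasSubgaussianMGF_gaussianReal v).measure_ge_le hε)
    ((hasSubgaussianMGF_gaussianReal v).neg.measure_ge_le hε))

theorem stdComplexGaussian_norm_ge_le {t : ℝ} (ht : 0 ≤ t) :
    stdComplexGaussian {z | t ≤ ‖z‖} ≤ ENNReal.ofReal (4 * exp (-t ^ 2 / 4)) := by
  set ν := gaussianReal 0 (1 / 2)
  set A := {x : ℝ | t / 2 ≤ |x|}
  have hA : ν A ≤ ENNReal.ofReal (2 * exp (-t ^ 2 / 4)) := by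
    rw [← ofReal_measureReal]
    refine ENNReal.ofReal_le_ofReal ((gaussianReal_abs_ge_le _ (by positivity)).trans_eq ?_)
    norm_num [div_pow, neg_div]
  have hsub : Complex.measurableEquivRealProd.symm ⁻¹' {z | t ≤ ‖z‖} ⊆
      A ×ˢ univ ∪ univ ×ˢ A := by
    rintro ⟨a, b⟩ hab
    have hsum : t ≤ |a| + |b| := hab.trans (Complex.norm_le_abs_re_add_abs_im ⟨a, b⟩)
    by_cases ha : t / 2 ≤ |a|
    · exact Or.inl ⟨ha, mem_univ _⟩
    · exact Or.inr ⟨mem_univ _, show t / 2 ≤ |b| by linarith⟩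
  rw [stdComplexGaussian, Measure.map_apply (MeasurableEquiv.measurable _)
    (measurableSet_le measurable_const measurable_norm)]
  calc (ν.prod ν) (Complex.measurableEquivRealProd.symm ⁻¹' {z | t ≤ ‖z‖})
      ≤ (ν.prod ν) (A ×ˢ univ) + (ν.prod ν) (univ ×ˢ A) :=
        (measure_mono hsub).trans (measure_union_le _ _)
    _ ≤ ENNReal.ofReal (2 * exp (-t ^ 2 / 4)) + ENNReal.ofReal (2 * exp (-t ^ 2 / 4)) := by
        rw [Measure.prod_prod, Measure.prod_prod, measure_univ, mul_one, one_mul]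
        exact add_le_add hA hA
    _ = ENNReal.ofReal (4 * exp (-t ^ 2 / 4)) := by
        rw [← ENNReal.ofReal_add (by positivity) (by positivity)]; ring_nf

theorem measure_pi_norm_ge_le {Ω ι : Type*} [MeasurableSpace Ω] [Fintype ι] (P : Measure Ω)
    (h : ι → Ω → ℂ) (hmeas : ∀ i, Measurable (h i))
    (hdist : ∀ i, P.map (h i) = stdComplexGaussian) {t : ℝ} (ht : 0 < t) :
    P {ω | t ≤ ‖fun i => h i ω‖} ≤ ENNReal.ofReal (Fintype.card ι * (4 * exp (-t ^ 2 / 4))) := by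
  have hsub : {ω | t ≤ ‖fun i => h i ω‖} ⊆ ⋃ i, h i ⁻¹' {z | t ≤ ‖z‖} := by
    intro ω hω
    by_contra! hnot
    simp only [mem_iUnion, mem_preimage, mem_ofPred_eq, not_exists, not_le] at hnot
    exact (not_lt.2 hω) ((pi_norm_lt_iff ht).2 hnot)
  calc P {ω | t ≤ ‖fun i => h i ω‖}
      ≤ ∑ i, P (h i ⁻¹' {z | t ≤ ‖z‖}) := (measure_mono hsub).trans (measure_iUnion_fintype_le _ _)
    _ ≤ ∑ _i : ι, ENNReal.ofReal (4 * exp (-t ^ 2 / 4)) := by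
        refine Finset.sum_le_sum fun i _ => ?_
        rw [← Measure.map_apply (hmeas i) (measurableSet_le measurable_const measurable_norm),
          hdist i]
        exact stdComplexGaussian_norm_ge_le ht.le
    _ = ENNReal.ofReal (Fintype.card ι * (4 * exp (-t ^ 2 / 4))) := by
        rw [Finset.sum_const, Finset.card_univ, nsmul_eq_mul,
          ENNReal.ofReal_mul (Nat.cast_nonneg _), ENNReal.ofReal_natCast]

theorem div_sub_one_le_of_lt_pow {k C y : ℝ} {m : ℕ} (hk : 0 ≤ k) (hC : 0 < C) (hy : 0 ≤ y)
    (hm : m ≠ 0) (h : k < (C * (1 + y)) ^ m) : k ^ (m : ℝ)⁻¹ / C - 1 ≤ y := by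
  have hroot : k ^ (m : ℝ)⁻¹ < C * (1 + y) :=
    (rpow_inv_lt_iff_of_pos hk (by positivity) (by positivity)).2 (by rwa [rpow_natCast])
  rw [sub_le_iff_le_add, div_le_iff₀ hC]
  linarith

theorem exp_neg_sq_sub_one_div_four_le (u : ℝ) : exp (-(u - 1) ^ 2 / 4) ≤ exp 2 * exp (-u) := by
  rw [← exp_add]
  exact exp_le_exp.2 (by nlinarith [sq_nonneg (u - 3)])

theorem stmt_2_general {Ω : Type*} [MeasurableSpace Ω] (P : Measure Ω)
    (M : ℕ) (h : Fin M → Ω → ℂ) (hmeas : ∀ i, Measurable (h i))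
    (hdist : ∀ i, Measure.map (h i) P = stdComplexGaussian)
    (f : MvPolynomial (Fin M) ℂ) :
    ∃ A B d δ : ℝ, 0 < A ∧ 0 < B ∧ 0 < d ∧ 0 < δ ∧
      ∀ k : ℝ, δ ≤ k →
        (P {ω | k < ‖MvPolynomial.eval (fun i => h i ω) f‖ ^ 2}).toReal ≤
          A * Real.exp (-B * k ^ (1 / d)) := by
  obtain ⟨C, hC, n, hn, hgrowth⟩ := f.exists_norm_eval_le_pow
  have hn' : (0 : ℝ) < (2 * n : ℕ) := by positivity
  refine ⟨4 * (M + 1) * exp 2, 1 / C, (2 * n : ℕ), (2 * C) ^ (2 * n), by positivity,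
    by positivity, hn', by positivity, fun k hkδ => ?_⟩
  have hk : 0 ≤ k := (by positivity : (0 : ℝ) ≤ (2 * C) ^ (2 * n)).trans hkδ
  simp only [one_div]
  set r := k ^ ((2 * n : ℕ) : ℝ)⁻¹
  have hr : 2 * C ≤ r := (le_rpow_inv_iff_of_pos (by positivity) hk hn').2 (by rwa [rpow_natCast])
  have hsub : {ω | k < ‖MvPolynomial.eval (fun i => h i ω) f‖ ^ 2} ⊆
      {ω | r / C - 1 ≤ ‖fun i => h i ω‖} := fun ω hω =>
    div_sub_one_le_of_lt_pow hk hC (norm_nonneg _) (by positivity) <| by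
      rw [mul_comm 2 n, pow_mul]
      exact hω.trans_le (pow_le_pow_left₀ (norm_nonneg _) (hgrowth _) 2)
  have ht : 0 < r / C - 1 := by rw [sub_pos, one_lt_div hC]; linarith
  calc (P {ω | k < ‖MvPolynomial.eval (fun i => h i ω) f‖ ^ 2}).toReal
      ≤ M * (4 * exp (-(r / C - 1) ^ 2 / 4)) := by
        refine ENNReal.toReal_le_of_le_ofReal (by positivity) ?_
        simpa using (measure_mono hsub).trans (measure_pi_norm_ge_le P h hmeas hdist ht)
    _ ≤ (M + 1) * (4 * (exp 2 * exp (-(r / C)))) := by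
        gcongr
        · linarith
        · exact exp_neg_sq_sub_one_div_four_le _
    _ = 4 * (M + 1) * exp 2 * exp (-C⁻¹ * r) := by rw [neg_mul, ← div_eq_inv_mul]; ring

/-- Tail bound for a polynomial without constant term in i.i.d. standard complex
Gaussian random variables: there are constants `A, B, d, δ > 0` such that
`P(|f(h)|² > k) ≤ A exp(-B k^(1/d))` for all `k ≥ δ`. -/
theorem stmt_2 {Ω : Type*} [MeasurableSpace Ω] (P : Measure Ω) [IsProbabilityMeasure P]
    (M : ℕ) (h : Fin M → Ω → ℂ) (hmeas : ∀ i, Measurable (h i))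
    (hindep : iIndepFun h P)
    (hdist : ∀ i, Measure.map (h i) P = stdComplexGaussian)
    (f : MvPolynomial (Fin M) ℂ) (hf : f ≠ 0) (hf0 : MvPolynomial.constantCoeff f = 0) :
    ∃ A B d δ : ℝ, 0 < A ∧ 0 < B ∧ 0 < d ∧ 0 < δ ∧
      ∀ k : ℝ, δ ≤ k →
        (P {ω | k < ‖MvPolynomial.eval (fun i => h i ω) f‖ ^ 2}).toReal ≤
          A * Real.exp (-B * k ^ (1 / d)) :=
  stmt_2_general P M h hmeas hdist f
end

section
/- Let x₁,...,x_N be independent standard real Gaussian random variables and f ∈ ℝ[X₁,...,X_N] a nonzero polynomial. Then there exist constants A > 0, d > 0, K > 0 depending only on f such that for all 0 ≤ δ < K, P(|f(x₁,...,x_N)| < δ) ≤ A·δ^(1/d). -/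
/-!
Induct on the number of variables. Write `f` as a polynomial of degree `n` in the first variable
whose coefficients are polynomials in the others, with leading coefficient `g ≠ 0`. For a real
polynomial `p` of degree `n ≥ 1`, `|p x| = |lc p| * ∏ |x - a|` over its complex roots `a`, so
`|p x| < δ` forces `x` to lie within `(δ / |lc p|) ^ (1 / n)` of the real part of a root; hence
`{|p| < δ}` has Lebesgue measure at most `2 n (δ / |lc p|) ^ (1 / n)`, and the standard Gaussian,
whose density is at most `1`, is dominated by Lebesgue measure. By Fubini, the probability that
`|f| < δ` is at most the probability that `|g| < √δ` plus `2 n δ ^ (1 / (2 n))`, and the first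
term is controlled by the induction hypothesis.
-/

open MeasureTheory ProbabilityTheory Polynomial
open scoped ENNReal

namespace Polynomial

theorem abs_eval_eq_mul_prod_roots (p : ℝ[X]) (x : ℝ) :
    |p.eval x| = |p.leadingCoeff| *
      ((p.map (algebraMap ℝ ℂ)).roots.map fun a => ‖(x : ℂ) - a‖).prod := by
  have h := (IsAlgClosed.splits (p.map (algebraMap ℝ ℂ))).eval_eq_prod_roots (x : ℂ)
  rw [leadingCoeff_map_of_injective (algebraMap ℝ ℂ).injective, eval_map_algebraMap,
    ← Complex.coe_algebraMap, aeval_algebraMap_apply] at h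
  have := congrArg norm h
  simp only [Complex.coe_algebraMap, coe_aeval_eq_eval, Complex.norm_real, Real.norm_eq_abs,
    norm_mul] at this
  rw [this]
  exact congrArg _ (Multiset.prod_hom' _ (normHom : ℂ →*₀ ℝ) _).symm

theorem exists_root_re_near_of_abs_eval_lt (p : ℝ[X]) {x t : ℝ} (ht : 0 ≤ t)
    (hx : |p.eval x| < |p.leadingCoeff| * t ^ p.natDegree) :
    ∃ a ∈ (p.map (algebraMap ℝ ℂ)).roots, |x - a.re| < t := by
  by_contra! hfar
  have hprod : t ^ p.natDegree ≤
      ((p.map (algebraMap ℝ ℂ)).roots.map fun a => ‖(x : ℂ) - a‖).prod := by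
    have := Multiset.prod_map_le_prod_map₀ (fun _ => t) (fun a => ‖(x : ℂ) - a‖)
      (fun _ _ => ht) fun a ha => (hfar a ha).trans <| by
        simpa using Complex.abs_re_le_norm ((x : ℂ) - a)
    rwa [Multiset.map_const', Multiset.prod_replicate, IsAlgClosed.card_roots_eq_natDegree,
      natDegree_map] at this
  rw [abs_eval_eq_mul_prod_roots] at hx
  exact hx.not_ge (mul_le_mul_of_nonneg_left hprod (abs_nonneg _))

theorem volume_abs_eval_lt_le (p : ℝ[X]) (hp : p.natDegree ≠ 0) {δ : ℝ} (hδ : 0 ≤ δ) :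
    volume {x | |p.eval x| < δ} ≤ ENNReal.ofReal
      (2 * p.natDegree * (δ / |p.leadingCoeff|) ^ (1 / (p.natDegree : ℝ))) := by
  set n := p.natDegree
  set roots := (p.map (algebraMap ℝ ℂ)).roots
  set t := (δ / |p.leadingCoeff|) ^ (1 / (n : ℝ))
  have hlc : 0 < |p.leadingCoeff| := by
    simpa using fun h : p = 0 => hp (by simp [n, h])
  have ht : 0 ≤ t := by positivity
  have htn : |p.leadingCoeff| * t ^ n = δ := by
    rw [← Real.rpow_natCast, ← Real.rpow_mul (by positivity), one_div_mul_cancel (by simpa),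
      Real.rpow_one, mul_div_cancel₀ _ hlc.ne']
  have hcover : {x | |p.eval x| < δ} ⊆ ⋃ a ∈ roots.toFinset, Metric.ball a.re t := by
    intro x hx
    obtain ⟨a, ha, hxa⟩ := exists_root_re_near_of_abs_eval_lt p ht (htn.symm ▸ hx)
    exact Set.mem_biUnion (Multiset.mem_toFinset.mpr ha) hxa
  calc volume {x | |p.eval x| < δ}
      ≤ ∑ a ∈ roots.toFinset, volume (Metric.ball a.re t) :=
        (measure_mono hcover).trans (measure_biUnion_finset_le _ _)
    _ = roots.toFinset.card * ENNReal.ofReal (2 * t) := by simp [Real.volume_ball]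
    _ ≤ n * ENNReal.ofReal (2 * t) := by
        gcongr
        exact_mod_cast roots.toFinset_card_le.trans
          (IsAlgClosed.card_roots_eq_natDegree.trans (natDegree_map _)).le
    _ = ENNReal.ofReal (2 * n * t) := by
        rw [← ENNReal.ofReal_natCast, ← ENNReal.ofReal_mul (by positivity), mul_left_comm,
          mul_assoc]

theorem measure_abs_eval_lt_le {ν : Measure ℝ} (hν : ν ≤ volume) (p : ℝ[X]) {δ ε : ℝ}
    (hδ : 0 ≤ δ) (hδε : δ ≤ ε) (hε : 0 < ε) (hεp : ε ≤ |p.leadingCoeff|) :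
    ν {x | |p.eval x| < δ} ≤ ENNReal.ofReal
      (2 * p.natDegree * (δ / ε) ^ (1 / (p.natDegree : ℝ))) := by
  by_cases hp : p.natDegree = 0
  · have hempty : {x | |p.eval x| < δ} = ∅ := by
      rw [eq_C_of_natDegree_eq_zero hp]
      ext x
      simpa [leadingCoeff, hp] using hδε.trans hεp
    simp [hempty]
  calc ν {x | |p.eval x| < δ}
      ≤ volume {x | |p.eval x| < δ} := hν _
    _ ≤ _ := volume_abs_eval_lt_le p hp hδ
    _ ≤ _ := by gcongr

end Polynomial

theorem gaussianReal_le_volume (m : ℝ) : gaussianReal m 1 ≤ volume := by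
  have hpdf (x : ℝ) : gaussianPDF m 1 x ≤ 1 := by
    refine ENNReal.ofReal_le_one.mpr (mul_le_one₀ ?_ (Real.exp_nonneg _) ?_)
    · refine inv_le_one_of_one_le₀ (Real.one_le_sqrt.mpr ?_)
      push_cast
      linarith [Real.pi_gt_three]
    · refine Real.exp_le_one_iff.mpr (div_nonpos_of_nonpos_of_nonneg ?_ (by positivity))
      exact neg_nonpos.mpr (sq_nonneg _)
  calc gaussianReal m 1 = volume.withDensity (gaussianPDF m 1) :=
        gaussianReal_of_var_ne_zero m one_ne_zero
    _ ≤ volume.withDensity 1 := withDensity_mono (ae_of_all _ hpdf)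
    _ = volume := withDensity_one

theorem Real.sqrt_rpow_one_div_le {δ a b : ℝ} (hδ0 : 0 ≤ δ) (hδ1 : δ ≤ 1) (ha : 0 < a)
    (hab : 2 * a ≤ b) : √δ ^ (1 / a) ≤ δ ^ (1 / b) := by
  rw [Real.sqrt_eq_rpow, ← Real.rpow_mul hδ0]
  refine Real.rpow_le_rpow_of_exponent_ge' hδ0 hδ1 (one_div_pos.mpr (by linarith)).le ?_
  rw [one_div_mul_one_div]
  exact one_div_le_one_div_of_le (by positivity) hab

section SmallBall

variable {α β : Type*} [MeasurableSpace α] [MeasurableSpace β]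

def SmallBallEstimate (μ : Measure α) (F : α → ℝ) : Prop :=
  ∃ A d K : ℝ, 0 < A ∧ 0 < d ∧ 0 < K ∧
    ∀ δ : ℝ, 0 ≤ δ → δ < K → μ {a | |F a| < δ} ≤ ENNReal.ofReal (A * δ ^ (1 / d))

theorem smallBallEstimate_const (μ : Measure α) {c : ℝ} (hc : c ≠ 0) :
    SmallBallEstimate μ fun _ => c := by
  refine ⟨1, 1, |c|, one_pos, one_pos, abs_pos.mpr hc, fun δ _ hδ => ?_⟩
  simp [hδ.not_gt]

theorem SmallBallEstimate.comp_measurePreserving {μ : Measure α} {ν : Measure β} {F : β → ℝ}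
    (h : SmallBallEstimate ν F) (hF : Measurable F) {e : α → β} (he : MeasurePreserving e μ ν) :
    SmallBallEstimate μ (F ∘ e) := by
  obtain ⟨A, d, K, hA, hd, hK, hball⟩ := h
  refine ⟨A, d, K, hA, hd, hK, fun δ hδ hδK => ?_⟩
  have hset : MeasurableSet {b | |F b| < δ} := measurableSet_lt hF.abs measurable_const
  exact (he.measure_preimage hset.nullMeasurableSet).trans_le (hball δ hδ hδK)

end SmallBall

section InductionStep

open MvPolynomial

variable {N : ℕ} {ν : Measure ℝ} {μ : Measure (Fin N → ℝ)}
  [IsProbabilityMeasure ν] [IsProbabilityMeasure μ]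

theorem prod_measure_abs_eval_cons_lt_le (hν : ν ≤ volume) (f : MvPolynomial (Fin (N + 1)) ℝ)
    {δ ε : ℝ} (hδ : 0 ≤ δ) (hδε : δ ≤ ε) (hε : 0 < ε) :
    (ν.prod μ) {p | |eval (Fin.cons p.1 p.2) f| < δ} ≤
      μ {y | |eval y (finSuccEquiv ℝ N f).leadingCoeff| < ε} + ENNReal.ofReal
        (2 * (finSuccEquiv ℝ N f).natDegree *
          (δ / ε) ^ (1 / ((finSuccEquiv ℝ N f).natDegree : ℝ))) := by
  set q := finSuccEquiv ℝ N f
  set E := {y | |eval y q.leadingCoeff| < ε}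
  set c := ENNReal.ofReal (2 * q.natDegree * (δ / ε) ^ (1 / (q.natDegree : ℝ)))
  have hfiber (y : Fin N → ℝ) :
      ν {t | |(q.map (eval y)).eval t| < δ} ≤ E.indicator 1 y + c := by
    by_cases hy : y ∈ E
    · simpa [hy] using le_add_right prob_le_one
    have hlc : ε ≤ |eval y q.leadingCoeff| := not_lt.mp hy
    have hlc0 : eval y q.leadingCoeff ≠ 0 := abs_pos.mp (hε.trans_le hlc)
    have := Polynomial.measure_abs_eval_lt_le hν (q.map (eval y)) hδ hδε hε
      (by rwa [leadingCoeff_map_of_leadingCoeff_ne_zero _ hlc0])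
    rw [natDegree_map_of_leadingCoeff_ne_zero _ hlc0] at this
    rwa [Set.indicator_of_notMem hy, zero_add]
  have hmeas : MeasurableSet {p : ℝ × (Fin N → ℝ) | |eval (Fin.cons p.1 p.2) f| < δ} :=
    measurableSet_lt ((continuous_eval f).comp
      (continuous_fst.finCons continuous_snd)).abs.measurable measurable_const
  calc (ν.prod μ) {p | |eval (Fin.cons p.1 p.2) f| < δ}
      = ∫⁻ y, ν {t | |(q.map (eval y)).eval t| < δ} ∂μ := by
        simp_rw [Measure.prod_apply_symm hmeas, Set.preimage_ofPred_eq, eval_eq_eval_mv_eval', q]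
    _ ≤ ∫⁻ y, (E.indicator 1 y + c) ∂μ := lintegral_mono hfiber
    _ = μ E + c := by
        have hE : MeasurableSet E :=
          measurableSet_lt (continuous_eval _).abs.measurable measurable_const
        rw [lintegral_add_right _ measurable_const, lintegral_indicator_one hE]
        simp

theorem SmallBallEstimate.prod_finCons (hν : ν ≤ volume) {f : MvPolynomial (Fin (N + 1)) ℝ}
    (h : SmallBallEstimate μ fun y => eval y (finSuccEquiv ℝ N f).leadingCoeff) :
    SmallBallEstimate (ν.prod μ) fun p => eval (Fin.cons p.1 p.2) f := by
  obtain ⟨A, d, K, hA, hd, hK, hball⟩ := h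
  set n : ℝ := ((finSuccEquiv ℝ N f).natDegree : ℝ)
  have hn : 0 ≤ n := Nat.cast_nonneg _
  refine ⟨A + 2 * n, 2 * d + 2 * n, min (K ^ 2) 1, by positivity, by positivity,
    by positivity, fun δ hδ hδK => ?_⟩
  rcases hδ.eq_or_lt with rfl | hδ0
  · simp [fun a : ℝ => (abs_nonneg a).not_gt]
  -- the leading coefficient is tested at scale `√δ`, the fibers at scale `δ / √δ = √δ`
  have hδ1 : δ ≤ 1 := (hδK.trans_le (min_le_right _ _)).le
  have hδε : δ ≤ √δ := Real.le_sqrt_of_sq_le (by nlinarith)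
  have hεK : √δ < K := (Real.sqrt_lt' hK).mpr (hδK.trans_le (min_le_left _ _))
  have hlead : A * √δ ^ (1 / d) ≤ A * δ ^ (1 / (2 * d + 2 * n)) :=
    mul_le_mul_of_nonneg_left (Real.sqrt_rpow_one_div_le hδ hδ1 hd (by linarith)) hA.le
  have hfiber : 2 * n * (δ / √δ) ^ (1 / n) ≤ 2 * n * δ ^ (1 / (2 * d + 2 * n)) := by
    rcases hn.eq_or_lt with hn0 | hn0
    · simp [← hn0]
    rw [Real.div_sqrt]
    exact mul_le_mul_of_nonneg_left (Real.sqrt_rpow_one_div_le hδ hδ1 hn0 (by linarith))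
      (by positivity)
  calc (ν.prod μ) {p | |eval (Fin.cons p.1 p.2) f| < δ}
      ≤ μ {y | |eval y (finSuccEquiv ℝ N f).leadingCoeff| < √δ} +
          ENNReal.ofReal (2 * n * (δ / √δ) ^ (1 / n)) :=
        prod_measure_abs_eval_cons_lt_le hν f hδ hδε (Real.sqrt_pos.mpr hδ0)
    _ ≤ ENNReal.ofReal (A * √δ ^ (1 / d)) + ENNReal.ofReal (2 * n * (δ / √δ) ^ (1 / n)) := by
        gcongr
        exact hball _ (Real.sqrt_nonneg δ) hεK
    _ ≤ ENNReal.ofReal ((A + 2 * n) * δ ^ (1 / (2 * d + 2 * n))) := by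
        rw [← ENNReal.ofReal_add (by positivity) (by positivity)]
        exact ENNReal.ofReal_le_ofReal (by linarith)

end InductionStep

open MvPolynomial in
theorem smallBallEstimate_pi_eval {ν : Measure ℝ} [IsProbabilityMeasure ν] (hν : ν ≤ volume) :
    ∀ {N : ℕ} {f : MvPolynomial (Fin N) ℝ}, f ≠ 0 →
      SmallBallEstimate (Measure.pi fun _ : Fin N => ν) fun y => eval y f
  | 0, f, hf => by
    obtain ⟨c, rfl⟩ := C_surjective (Fin 0) f
    simpa using smallBallEstimate_const _ (by rintro rfl; exact hf C_0)
  | N + 1, f, hf => by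
    have hlead : (finSuccEquiv ℝ N f).leadingCoeff ≠ 0 := by simpa using hf
    have := ((smallBallEstimate_pi_eval hν hlead).prod_finCons hν).comp_measurePreserving
      ((continuous_eval f).comp (continuous_fst.finCons continuous_snd)).measurable
      (measurePreserving_piFinSuccAbove (fun _ : Fin (N + 1) => ν) 0)
    simpa [Function.comp_def, MeasurableEquiv.piFinSuccAbove_apply] using this

/-- Small-ball estimate for a nonzero polynomial in i.i.d. standard real Gaussians:
there exist constants `A, d, K > 0` (depending only on `f`) with
`P(|f(x)| < δ) ≤ A δ^(1/d)` for all `0 ≤ δ < K`. -/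
theorem stmt_3 {Ω : Type*} [MeasurableSpace Ω] (P : Measure Ω) [IsProbabilityMeasure P]
    (N : ℕ) (x : Fin N → Ω → ℝ) (hmeas : ∀ i, Measurable (x i))
    (hindep : iIndepFun x P)
    (hdist : ∀ i, Measure.map (x i) P = gaussianReal 0 1)
    (f : MvPolynomial (Fin N) ℝ) (hf : f ≠ 0) :
    ∃ A d K : ℝ, 0 < A ∧ 0 < d ∧ 0 < K ∧
      ∀ δ : ℝ, 0 ≤ δ → δ < K →
        (P {ω | |MvPolynomial.eval (fun i => x i ω) f| < δ}).toReal ≤ A * δ ^ (1 / d) := by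
  have hlaw : MeasurePreserving (fun ω i => x i ω) P (Measure.pi fun _ => gaussianReal 0 1) := by
    refine ⟨measurable_pi_lambda _ hmeas, ?_⟩
    rw [(iIndepFun_iff_map_fun_eq_pi_map fun i => (hmeas i).aemeasurable).mp hindep]
    simp_rw [hdist]
  obtain ⟨A, d, K, hA, hd, hK, hball⟩ :=
    (smallBallEstimate_pi_eval (gaussianReal_le_volume 0) hf).comp_measurePreserving
      (MvPolynomial.continuous_eval f).measurable hlaw
  exact ⟨A, d, K, hA, hd, hK, fun δ hδ hδK =>
    ENNReal.toReal_le_of_le_ofReal (by positivity) (hball δ hδ hδK)⟩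
end

section
/- Let A and B be n×n Hermitian positive semidefinite complex matrices with B positive definite, and let ρ > 0. Then det(I + ρ·λ_min(B)·A) ≤ det(I + ρ·A·B) ≤ det(I + ρ·λ_max(B)·A), where λ_min(B) and λ_max(B) are the smallest and largest eigenvalues of B. -/
/-!
Write `A = C * C` with `C = √A`. Sylvester's identity `det (1 + X * Y) = det (1 + Y * X)` gives
`det (1 + ρ A B) = det (1 + ρ C B C)`, and in the Loewner order
`λ_min(B) • 1 ≤ B ≤ λ_max(B) • 1`, hence `ρ λ_min(B) A ≤ ρ C B C ≤ ρ λ_max(B) A`.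
Both bounds then follow from monotonicity of `det` on positive definite matrices: if `P ≤ Q` and
`R = √P`, then `1 = R⁻¹ P R⁻¹ ≤ R⁻¹ Q R⁻¹`, so all eigenvalues of `R⁻¹ Q R⁻¹` are at least `1`
and `det Q = det P * det (R⁻¹ Q R⁻¹) ≥ det P`.
-/

open Matrix
open scoped ComplexOrder MatrixOrder

namespace Matrix

variable {𝕜 : Type*} [RCLike 𝕜] {n : Type*} [Fintype n] [DecidableEq n]

lemma IsHermitian.smul_one_le_iff {B : Matrix n n 𝕜} (hB : B.IsHermitian) {c : ℝ} :
    c • (1 : Matrix n n 𝕜) ≤ B ↔ ∀ i, c ≤ hB.eigenvalues i := by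
  rw [← Algebra.algebraMap_eq_smul_one, algebraMap_le_iff_le_spectrum hB.isSelfAdjoint,
    hB.spectrum_real_eq_range_eigenvalues, Set.forall_mem_range]

lemma IsHermitian.le_smul_one_iff {B : Matrix n n 𝕜} (hB : B.IsHermitian) {c : ℝ} :
    B ≤ c • (1 : Matrix n n 𝕜) ↔ ∀ i, hB.eigenvalues i ≤ c := by
  rw [← Algebra.algebraMap_eq_smul_one, le_algebraMap_iff_spectrum_le hB.isSelfAdjoint,
    hB.spectrum_real_eq_range_eigenvalues, Set.forall_mem_range]

lemma one_le_det_of_one_le {X : Matrix n n 𝕜} (hX : 1 ≤ X) : 1 ≤ X.det := by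
  have hXh : X.IsHermitian := (nonneg_iff_posSemidef.mp (zero_le_one.trans hX)).isHermitian
  have h1 : ∀ i, 1 ≤ hXh.eigenvalues i := hXh.smul_one_le_iff.mp (by rwa [one_smul])
  rw [hXh.det_eq_prod_eigenvalues, ← RCLike.ofReal_prod]
  exact_mod_cast Finset.one_le_prod fun i _ => h1 i

lemma PosDef.det_le_det_of_le {P Q : Matrix n n 𝕜} (hP : P.PosDef) (hPQ : P ≤ Q) :
    P.det ≤ Q.det := by
  set R := CFC.sqrt P
  have hR : R.IsHermitian := (nonneg_iff_posSemidef.mp (CFC.sqrt_nonneg P)).isHermitian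
  have hRR : R * R = P := CFC.sqrt_mul_sqrt_self P hP.posSemidef.nonneg
  have hRdet : IsUnit R.det := by
    refine Ne.isUnit fun h => hP.det_pos.ne' ?_
    rw [← hRR, det_mul, h, zero_mul]
  have hRPR : star R⁻¹ * P * R⁻¹ = 1 := by
    rw [star_eq_conjTranspose, hR.inv, ← hRR, ← Matrix.mul_assoc, nonsing_inv_mul R hRdet,
      Matrix.one_mul, mul_nonsing_inv R hRdet]
  have h1 : 1 ≤ (star R⁻¹ * Q * R⁻¹).det :=
    one_le_det_of_one_le (hRPR ▸ star_left_conjugate_le_conjugate hPQ R⁻¹)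
  have hdet : Q.det = P.det * (star R⁻¹ * Q * R⁻¹).det := by
    have := congrArg det hRPR
    simp only [det_mul, det_one] at this ⊢
    linear_combination (-Q.det) * this
  rw [hdet]
  exact le_mul_of_one_le_right hP.det_pos.le h1

lemma det_one_add_mul_le_of_le {A B₁ B₂ : Matrix n n 𝕜} (hA : 0 ≤ A) (hB₁ : 0 ≤ B₁)
    (h : B₁ ≤ B₂) : (1 + A * B₁).det ≤ (1 + A * B₂).det := by
  set C := CFC.sqrt A
  have hC : star C = C := (nonneg_iff_posSemidef.mp (CFC.sqrt_nonneg A)).isHermitian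
  have hsylvester : ∀ B, (1 + A * B).det = (1 + star C * B * C).det := by
    intro B
    rw [← CFC.sqrt_mul_sqrt_self A hA, Matrix.mul_assoc, det_one_add_mul_comm, hC]
  rw [hsylvester, hsylvester]
  refine PosDef.det_le_det_of_le (PosDef.one.add_posSemidef ?_) ?_
  · exact nonneg_iff_posSemidef.mp (star_left_conjugate_nonneg hB₁ C)
  · exact add_le_add_right (star_left_conjugate_le_conjugate h C) 1

end Matrix

theorem stmt_6_general (n : ℕ) (A B : Matrix (Fin n) (Fin n) ℂ)
    (hA : A.PosSemidef) (hB : B.PosDef) (ρ : ℝ) (hρ : 0 < ρ) :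
    ((1 + (ρ * ⨅ i, hB.1.eigenvalues i) • A).det).re ≤ ((1 + ρ • (A * B)).det).re ∧
    ((1 + ρ • (A * B)).det).re ≤ ((1 + (ρ * ⨆ i, hB.1.eigenvalues i) • A).det).re := by
  set m := ⨅ i, hB.1.eigenvalues i
  set M := ⨆ i, hB.1.eigenvalues i
  have hm : m • 1 ≤ B := hB.1.smul_one_le_iff.mpr fun i => ciInf_le (Finite.bddBelow_range _) i
  have hM : B ≤ M • 1 := hB.1.le_smul_one_iff.mpr fun i => le_ciSup (Finite.bddAbove_range _) i
  have hm0 : 0 ≤ m := Real.iInf_nonneg fun i => (hB.eigenvalues_pos i).le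
  have hscalar : ∀ c : ℝ, (ρ * c) • A = A * (ρ • c • 1) := by
    intro c
    rw [Matrix.mul_smul, Matrix.mul_smul, Matrix.mul_one, smul_smul]
  have hmono : ∀ {B₁ B₂ : Matrix (Fin n) (Fin n) ℂ}, 0 ≤ B₁ → B₁ ≤ B₂ →
      ((1 + A * (ρ • B₁)).det).re ≤ ((1 + A * (ρ • B₂)).det).re := fun hB₁ h =>
    Complex.re_le_re <| det_one_add_mul_le_of_le hA.nonneg (smul_nonneg hρ.le hB₁)
      (smul_le_smul_of_nonneg_left h hρ.le)
  rw [hscalar, hscalar, ← Matrix.mul_smul]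
  exact ⟨hmono (smul_nonneg hm0 zero_le_one) hm, hmono hB.posSemidef.nonneg hM⟩

/-- Amir-Moez style determinant bounds: for `A` Hermitian PSD and `B` Hermitian PD,
`det(I + ρ λ_min(B) A) ≤ det(I + ρ A B) ≤ det(I + ρ λ_max(B) A)`. -/
theorem stmt_6 (n : ℕ) (hn : 0 < n) (A B : Matrix (Fin n) (Fin n) ℂ)
    (hA : A.PosSemidef) (hB : B.PosDef) (ρ : ℝ) (hρ : 0 < ρ) :
    ((1 + (ρ * ⨅ i, hB.1.eigenvalues i) • A).det).re ≤ ((1 + ρ • (A * B)).det).re ∧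
    ((1 + ρ • (A * B)).det).re ≤ ((1 + (ρ * ⨆ i, hB.1.eigenvalues i) • A).det).re :=
  stmt_6_general n A B hA hB ρ hρ
end

section
/- Let H be a square complex block lower triangular matrix with diagonal blocks H_{11},...,H_{NN}, and let H⁽⁰⁾ be the block diagonal matrix with the same diagonal blocks. Then for all ρ ≥ 0, det(I + ρ H H^†) ≥ det(I + ρ H⁽⁰⁾ (H⁽⁰⁾)^†). -/
/-!
Write `H = [[A, 0], [B, C]]` with `A` the first diagonal block. The Schur complement of
`1 + A Aᴴ` in `1 + H Hᴴ` is `1 + C Cᴴ + S`, where `S = B Bᴴ - B Aᴴ (1 + A Aᴴ)⁻¹ A Bᴴ` is positive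
semidefinite, being the Schur complement of `[[1 + A Aᴴ, A Bᴴ], [B Aᴴ, B Bᴴ]] = X Xᴴ` for
`X = [[1, A], [0, B]]`. Since `det` is monotone on positive definite matrices,
`det (1 + H Hᴴ) ≥ det (1 + A Aᴴ) * det (1 + C Cᴴ)`, with equality when `B = 0`. Induction on the
number of blocks then compares `H` with its block diagonal part, and `ρ` is absorbed as `√ρ • H`.
-/

open Matrix
open scoped ComplexOrder

def Fin.sigmaSuccEquiv {N : ℕ} (α : Fin (N + 1) → Type*) :
    α 0 ⊕ (Σ i : Fin N, α i.succ) ≃ Σ i : Fin (N + 1), α i where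
  toFun := Sum.elim (fun x => ⟨0, x⟩) (fun p => ⟨p.1.succ, p.2⟩)
  invFun p := Fin.cases (motive := fun i => α i → _) Sum.inl (fun i x => Sum.inr ⟨i, x⟩) p.1 p.2
  left_inv := by rintro (x | ⟨i, x⟩) <;> simp
  right_inv := by
    rintro ⟨i, x⟩
    induction i using Fin.cases <;> simp

namespace Matrix

variable {𝕜 : Type*} [RCLike 𝕜] {m n : Type*} [Fintype m] [DecidableEq m] [Fintype n]
  [DecidableEq n]

lemma posDef_one_add_self_mul_conjTranspose {l : Type*} [Fintype l] (A : Matrix n l 𝕜) :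
    (1 + A * Aᴴ).PosDef :=
  PosDef.one.add_posSemidef (posSemidef_self_mul_conjTranspose A)

lemma PosSemidef.one_le_det_one_add {R : Matrix n n 𝕜} (hR : R.PosSemidef) :
    1 ≤ (1 + R).det := by
  have hdiag : 1 + R = Unitary.conjStarAlgAut 𝕜 _ hR.1.eigenvectorUnitary
      (diagonal fun i => 1 + (hR.1.eigenvalues i : 𝕜)) := by
    rw [← diagonal_add, diagonal_one, map_add, map_one]
    exact congrArg (1 + ·) hR.1.spectral_theorem
  rw [hdiag, Unitary.conjStarAlgAut_apply, det_mul_right_comm, det_mul,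
    Unitary.mul_star_self_of_mem (SetLike.coe_mem _), det_one, one_mul, det_diagonal]
  exact Finset.one_le_prod fun i _ =>
    le_add_of_nonneg_right <| RCLike.ofReal_nonneg.mpr <| hR.eigenvalues_nonneg i

lemma PosDef.det_le_det_add {A Q : Matrix n n 𝕜} (hA : A.PosDef) (hQ : Q.PosSemidef) :
    A.det ≤ (A + Q).det := by
  open scoped MatrixOrder in
  obtain ⟨Y, hY, rfl⟩ :=
    CStarAlgebra.isStrictlyPositive_iff_eq_star_mul_self.mp hA.isStrictlyPositive
  have hYY : Y⁻¹ * Y = 1 := nonsing_inv_mul Y ((isUnit_iff_isUnit_det Y).mp hY)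
  have hconj : star Y * Y + Q = star Y * (1 + Y⁻¹ᴴ * Q * Y⁻¹) * Y := by
    rw [mul_add, add_mul, mul_one, ← star_eq_conjTranspose]
    congr 1
    simp only [← mul_assoc, ← star_mul, hYY, star_one, one_mul]
    simp only [mul_assoc, hYY, mul_one]
  rw [hconj, det_mul_right_comm, det_mul (star Y * Y)]
  exact le_mul_of_one_le_right hA.det_pos.le
    (hQ.conjTranspose_mul_mul_same Y⁻¹).one_le_det_one_add

lemma one_add_fromBlocks_mul_conjTranspose (A : Matrix m m 𝕜) (B : Matrix n m 𝕜)
    (C : Matrix n n 𝕜) :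
    1 + fromBlocks A 0 B C * (fromBlocks A 0 B C)ᴴ
      = fromBlocks (1 + A * Aᴴ) (A * Bᴴ) (B * Aᴴ) (1 + (B * Bᴴ + C * Cᴴ)) := by
  rw [fromBlocks_conjTranspose, fromBlocks_multiply, ← fromBlocks_one, fromBlocks_add]
  simp

lemma det_one_add_fromBlocks_zero_zero_mul_conjTranspose (A : Matrix m m 𝕜)
    (C : Matrix n n 𝕜) :
    (1 + fromBlocks A 0 0 C * (fromBlocks A 0 0 C)ᴴ).det
      = (1 + A * Aᴴ).det * (1 + C * Cᴴ).det := by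
  simp [one_add_fromBlocks_mul_conjTranspose, det_fromBlocks_zero₂₁]

lemma det_one_add_mul_det_one_add_le_fromBlocks (A : Matrix m m 𝕜) (B : Matrix n m 𝕜)
    (C : Matrix n n 𝕜) :
    (1 + A * Aᴴ).det * (1 + C * Cᴴ).det
      ≤ (1 + fromBlocks A 0 B C * (fromBlocks A 0 B C)ᴴ).det := by
  have hA := posDef_one_add_self_mul_conjTranspose A
  let := hA.isUnit.invertible
  have hgram : (fromBlocks (1 + A * Aᴴ) (A * Bᴴ) (A * Bᴴ)ᴴ (B * Bᴴ)).PosSemidef := by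
    simpa [fromBlocks_conjTranspose, fromBlocks_multiply] using
      posSemidef_self_mul_conjTranspose (fromBlocks 1 A 0 B : Matrix (m ⊕ n) (m ⊕ m) 𝕜)
  have hschur := (hA.fromBlocks₁₁ _ _).mp hgram
  rw [conjTranspose_mul, conjTranspose_conjTranspose] at hschur
  have hsplit : 1 + (B * Bᴴ + C * Cᴴ) - B * Aᴴ * ⅟(1 + A * Aᴴ) * (A * Bᴴ)
      = 1 + C * Cᴴ + (B * Bᴴ - B * Aᴴ * (1 + A * Aᴴ)⁻¹ * (A * Bᴴ)) := by
    rw [invOf_eq_nonsing_inv]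
    abel
  rw [one_add_fromBlocks_mul_conjTranspose, det_fromBlocks₁₁, hsplit]
  exact mul_le_mul_of_nonneg_left
    ((posDef_one_add_self_mul_conjTranspose C).det_le_det_add hschur) hA.det_pos.le

lemma det_one_add_submatrix_mul_conjTranspose (H : Matrix m m 𝕜) (e : n ≃ m) :
    (1 + H.submatrix e e * (H.submatrix e e)ᴴ).det = (1 + H * Hᴴ).det := by
  rw [conjTranspose_submatrix, submatrix_mul_equiv, ← submatrix_one_equiv e,
    ← det_submatrix_equiv_self e (1 + H * Hᴴ)]
  rfl

theorem det_one_add_blockDiag_mul_conjTranspose_le {N : ℕ} {ι : Fin N → Type*}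
    [∀ i, Fintype (ι i)] [∀ i, DecidableEq (ι i)] (H H0 : Matrix (Σ i, ι i) (Σ i, ι i) 𝕜)
    (hH : ∀ p q : Σ i, ι i, p.1 < q.1 → H p q = 0)
    (hH0 : ∀ p q : Σ i, ι i, H0 p q = if p.1 = q.1 then H p q else 0) :
    (1 + H0 * H0ᴴ).det ≤ (1 + H * Hᴴ).det := by
  induction N with
  | zero =>
    have : IsEmpty (Σ i : Fin 0, ι i) := ⟨fun p => p.1.elim0⟩
    simp
  | succ N ih =>
    let e := Fin.sigmaSuccEquiv ι
    set G := H.submatrix e e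
    set G0 := H0.submatrix e e
    have hG : G = fromBlocks G.toBlocks₁₁ 0 G.toBlocks₂₁ G.toBlocks₂₂ := by
      ext (x | p) (y | q)
      · rfl
      · exact hH _ _ (Fin.succ_pos _)
      · rfl
      · rfl
    have hG0 : G0 = fromBlocks G.toBlocks₁₁ 0 0 G0.toBlocks₂₂ := by
      ext (x | p) (y | q)
      · exact (hH0 _ _).trans (if_pos rfl)
      · exact (hH0 _ _).trans (if_neg (Fin.succ_ne_zero _).symm)
      · exact (hH0 _ _).trans (if_neg (Fin.succ_ne_zero _))
      · rfl
    have hC : (1 + G0.toBlocks₂₂ * G0.toBlocks₂₂ᴴ).det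
        ≤ (1 + G.toBlocks₂₂ * G.toBlocks₂₂ᴴ).det :=
      ih _ _ (fun p q h => hH _ _ (Fin.succ_lt_succ_iff.mpr h))
        (fun p q => (hH0 _ _).trans (if_congr Fin.succ_inj rfl rfl))
    rw [← det_one_add_submatrix_mul_conjTranspose H e,
      ← det_one_add_submatrix_mul_conjTranspose H0 e]
    change (1 + G0 * G0ᴴ).det ≤ (1 + G * Gᴴ).det
    rw [hG0, det_one_add_fromBlocks_zero_zero_mul_conjTranspose, hG]
    calc _ ≤ (1 + G.toBlocks₁₁ * G.toBlocks₁₁ᴴ).det * (1 + G.toBlocks₂₂ * G.toBlocks₂₂ᴴ).det :=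
          mul_le_mul_of_nonneg_left hC
            (posDef_one_add_self_mul_conjTranspose _).det_pos.le
      _ ≤ _ := det_one_add_mul_det_one_add_le_fromBlocks _ _ _

lemma real_smul_mul_conjTranspose_self {l k : Type*} [Fintype k] {ρ : ℝ} (hρ : 0 ≤ ρ)
    (X : Matrix l k 𝕜) : ρ • (X * Xᴴ) = (√ρ • X) * (√ρ • X)ᴴ := by
  rw [conjTranspose_smul, star_trivial, Matrix.smul_mul, Matrix.mul_smul, smul_smul,
    Real.mul_self_sqrt hρ]

end Matrix

/-- For a block lower triangular matrix `H` (blocks `H_{ij}` of sizes `N_i × N_j`,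
zero for `i < j`), and the block diagonal part `H⁽⁰⁾`,
`det(I + ρ H H†) ≥ det(I + ρ H⁽⁰⁾ (H⁽⁰⁾)†)` for all `ρ ≥ 0`. -/
theorem stmt_9 (N : ℕ) (sz : Fin N → ℕ)
    (H : Matrix ((i : Fin N) × Fin (sz i)) ((i : Fin N) × Fin (sz i)) ℂ)
    (hblt : ∀ p q : (i : Fin N) × Fin (sz i), p.1 < q.1 → H p q = 0)
    (H0 : Matrix ((i : Fin N) × Fin (sz i)) ((i : Fin N) × Fin (sz i)) ℂ)
    (hH0 : ∀ p q : (i : Fin N) × Fin (sz i), H0 p q = if p.1 = q.1 then H p q else 0)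
    (ρ : ℝ) (hρ : 0 ≤ ρ) :
    ((1 + ρ • (H0 * H0ᴴ)).det).re ≤ ((1 + ρ • (H * Hᴴ)).det).re := by
  rw [real_smul_mul_conjTranspose_self hρ, real_smul_mul_conjTranspose_self hρ]
  refine (Complex.le_def.mp (det_one_add_blockDiag_mul_conjTranspose_le (√ρ • H) (√ρ • H0)
    (fun p q h => by simp [hblt p q h]) (fun p q => ?_))).1
  simp only [Matrix.smul_apply, hH0 p q]
  split_ifs <;> simp
end

section
/- Let H be a square complex block lower triangular matrix and let H⁽ℓ⁾ denote its last (ℓ-th) sub-diagonal block matrix, i.e., the matrix retaining only the blocks H_{ij} with i − j = ℓ where ℓ is the largest index for which such a block is nonzero. Then for all ρ ≥ 0, det(I + ρ H H^†) ≥ det(I + ρ H⁽ℓ⁾ (H⁽ℓ⁾)^†). -/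
/-!
Write `1 + ρ H Hᴴ = C Cᴴ` with `C = [1 | √ρ H]`. By the Cauchy–Binet expansion, `det (C Cᴴ)` is
a positive multiple of the sum of the squared moduli of the maximal minors of `C`, so it suffices
to compare the minors of `C` and of `C' = [1 | √ρ H⁽ℓ⁾]` one by one. Grade the rows of `C` by their
block index `i` and its columns by `j` (identity part) resp. `j + ℓ` (the `H` part). Every nonzero
entry of `C` has row grade at most column grade, and `C'` is exactly the part of `C` where the two
grades agree. So a nonzero term in the permutation expansion of a minor of `C` is also a term of
the minor of `C'` exactly when the total row and column grades of the minor agree; as this does not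
depend on the term, each minor of `C'` is either `0` or the corresponding minor of `C`.
-/

open Matrix

namespace Matrix

section CauchyBinet

variable {n m R : Type*} [Fintype n] [DecidableEq n] [CommRing R]

theorem det_mul_eq_sum_det_submatrix_mul_prod [Fintype m] (C : Matrix n m R) (B : Matrix m n R) :
    det (C * B) = ∑ f : n → m, det (C.submatrix id f) * ∏ i, B (f i) i := by
  simp only [det_apply', mul_apply, Finset.prod_univ_sum, Finset.mul_sum, Finset.sum_mul,
    Fintype.piFinset_univ, submatrix_apply, id_eq]
  rw [Finset.sum_comm]
  refine Finset.sum_congr rfl fun f _ => Finset.sum_congr rfl fun σ _ => ?_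
  rw [Finset.prod_mul_distrib, mul_assoc]

theorem star_det_submatrix_eq_sum [StarRing R] (C : Matrix n m R) (f : n → m) :
    star (det (C.submatrix id f)) =
      ∑ τ : Equiv.Perm n, (Equiv.Perm.sign τ : R) * ∏ i, star (C i (f (τ i))) := by
  rw [← det_conjTranspose, det_apply']
  simp

theorem factorial_card_mul_det_mul_conjTranspose [Fintype m] [StarRing R] (C : Matrix n m R) :
    ((Fintype.card n).factorial : R) * det (C * Cᴴ) =
      ∑ f : n → m, det (C.submatrix id f) * star (det (C.submatrix id f)) := by
  calc ((Fintype.card n).factorial : R) * det (C * Cᴴ)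
      = ∑ τ : Equiv.Perm n, ∑ f : n → m,
          det (C.submatrix id (f ∘ τ)) * ∏ i, star (C i (f (τ i))) := by
        rw [← Fintype.card_perm, ← nsmul_eq_mul, ← Finset.card_univ, ← Finset.sum_const]
        refine Finset.sum_congr rfl fun τ _ => ?_
        rw [det_mul_eq_sum_det_submatrix_mul_prod]
        exact (Fintype.sum_equiv (Equiv.arrowCongr τ.symm (Equiv.refl m)) _ _ fun f => by
          simp [Equiv.arrowCongr]).symm
    _ = ∑ f : n → m, det (C.submatrix id f) *
          ∑ τ : Equiv.Perm n, (Equiv.Perm.sign τ : R) * ∏ i, star (C i (f (τ i))) := by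
        rw [Finset.sum_comm]
        refine Finset.sum_congr rfl fun f _ => ?_
        rw [Finset.mul_sum]
        refine Finset.sum_congr rfl fun τ _ => ?_
        rw [show C.submatrix id (f ∘ τ) = (C.submatrix id f).submatrix id τ from rfl,
          det_permute']
        ring
    _ = _ := by simp only [star_det_submatrix_eq_sum]

end CauchyBinet

section HomogeneousPart

variable {n m R : Type*} [CommRing R]

def homogeneousPart (r : n → ℕ) (c : m → ℕ) (M : Matrix n m R) : Matrix n m R :=
  of fun p q => if r p = c q then M p q else 0

theorem homogeneousPart_submatrix (r : n → ℕ) (c : m → ℕ) (M : Matrix n m R) (f : n → m) :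
    (homogeneousPart r c M).submatrix id f = homogeneousPart r (c ∘ f) (M.submatrix id f) :=
  rfl

theorem det_homogeneousPart [Fintype n] [DecidableEq n] {r c : n → ℕ} {M : Matrix n n R}
    (hM : ∀ p q, M p q ≠ 0 → r p ≤ c q) :
    det (homogeneousPart r c M) = if ∑ i, r i = ∑ i, c i then det M else 0 := by
  rw [det_apply', det_apply']
  split_ifs with hsum
  · refine Finset.sum_congr rfl fun σ _ => congrArg _ ?_
    by_cases hz : ∃ i, M (σ i) i = 0
    · obtain ⟨i, hi⟩ := hz
      rw [Finset.prod_eq_zero (f := fun j => M (σ j) j) (Finset.mem_univ i) hi]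
      exact Finset.prod_eq_zero (Finset.mem_univ i) (by simp [homogeneousPart, hi])
    · push Not at hz
      have hsum' : ∑ i, r (σ i) = ∑ i, c i := (Equiv.sum_comp σ r).trans hsum
      have heq := (Finset.sum_eq_sum_iff_of_le fun i _ => hM _ _ (hz i)).mp hsum'
      exact Finset.prod_congr rfl fun i hi => if_pos (heq i hi)
  · refine Finset.sum_eq_zero fun σ _ => ?_
    suffices ∃ i, ¬r (σ i) = c i by
      obtain ⟨i, hi⟩ := this
      rw [Finset.prod_eq_zero (Finset.mem_univ i) (if_neg hi), mul_zero]
    by_contra! heq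
    exact hsum ((Equiv.sum_comp σ r).symm.trans (Finset.sum_congr rfl fun i _ => heq i))

end HomogeneousPart

variable {n m : Type*} [Fintype n] [DecidableEq n] [Fintype m]

theorem re_det_mul_conjTranspose_le {C C' : Matrix n m ℂ}
    (h : ∀ f : n → m,
      Complex.normSq (det (C'.submatrix id f)) ≤ Complex.normSq (det (C.submatrix id f))) :
    (det (C' * C'ᴴ)).re ≤ (det (C * Cᴴ)).re := by
  have hre : ∀ C : Matrix n m ℂ, ((Fintype.card n).factorial : ℝ) * (det (C * Cᴴ)).re =
      ∑ f : n → m, Complex.normSq (det (C.submatrix id f)) := fun C => by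
    simpa [Complex.mul_conj] using
      congrArg Complex.re (factorial_card_mul_det_mul_conjTranspose C)
  refine le_of_mul_le_mul_left ?_ (Nat.cast_pos.mpr (Fintype.card n).factorial_pos)
  rw [hre, hre]
  exact Finset.sum_le_sum fun f _ => h f

theorem fromCols_one_sqrt_smul_mul_conjTranspose {ρ : ℝ} (hρ : 0 ≤ ρ) (A : Matrix n m ℂ) :
    fromCols (1 : Matrix n n ℂ) ((√ρ : ℂ) • A) * (fromCols (1 : Matrix n n ℂ) ((√ρ : ℂ) • A))ᴴ
      = 1 + ρ • (A * Aᴴ) := by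
  have hsq : (√ρ : ℂ) * star (√ρ : ℂ) = ρ := by
    rw [Complex.star_def, Complex.conj_ofReal, ← Complex.ofReal_mul, Real.mul_self_sqrt hρ]
  rw [conjTranspose_fromCols_eq_fromRows_conjTranspose, fromCols_mul_fromRows,
    conjTranspose_one, mul_one, conjTranspose_smul, Matrix.smul_mul, Matrix.mul_smul, smul_smul,
    hsq, Complex.coe_smul]

theorem re_det_one_add_smul_homogeneousPart_le (w : n → ℕ) (ℓ : ℕ) {H : Matrix n n ℂ}
    (hH : ∀ p q, w q + ℓ < w p → H p q = 0) {ρ : ℝ} (hρ : 0 ≤ ρ) :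
    let Hℓ := homogeneousPart w (w · + ℓ) H
    (det (1 + ρ • (Hℓ * Hℓᴴ))).re ≤ (det (1 + ρ • (H * Hᴴ))).re := by
  intro Hℓ
  set C := fromCols (1 : Matrix n n ℂ) ((√ρ : ℂ) • H)
  set c : n ⊕ n → ℕ := Sum.elim w (w · + ℓ)
  have hC' : fromCols (1 : Matrix n n ℂ) ((√ρ : ℂ) • Hℓ) = homogeneousPart w c C := by
    ext p (q | q)
    · by_cases hpq : p = q <;> simp [C, c, homogeneousPart, hpq]
    · by_cases hpq : w p = w q + ℓ <;> simp [C, c, Hℓ, homogeneousPart, hpq]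
  have hgrade : ∀ p j, C p j ≠ 0 → w p ≤ c j := by
    rintro p (q | q) hpq
    · by_cases h : p = q <;> simp_all [C, c]
    · by_contra hlt
      exact hpq (by simp [C, hH p q (by simpa [c] using hlt)])
  rw [← fromCols_one_sqrt_smul_mul_conjTranspose hρ, ← fromCols_one_sqrt_smul_mul_conjTranspose hρ,
    hC']
  refine re_det_mul_conjTranspose_le fun f => ?_
  rw [homogeneousPart_submatrix,
    det_homogeneousPart (c := c ∘ f) (M := C.submatrix id f) fun p i => hgrade p (f i)]
  split_ifs
  · exact le_rfl
  · simpa using Complex.normSq_nonneg _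

end Matrix

theorem stmt_10_general (N : ℕ) (sz : Fin N → ℕ)
    (H : Matrix ((i : Fin N) × Fin (sz i)) ((i : Fin N) × Fin (sz i)) ℂ)
    (ℓ : ℕ)
    (hmax : ∀ p q : (i : Fin N) × Fin (sz i), (q.1 : ℕ) + ℓ < (p.1 : ℕ) → H p q = 0)
    (Hl : Matrix ((i : Fin N) × Fin (sz i)) ((i : Fin N) × Fin (sz i)) ℂ)
    (hHl : ∀ p q : (i : Fin N) × Fin (sz i),
      Hl p q = if (p.1 : ℕ) = (q.1 : ℕ) + ℓ then H p q else 0)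
    (ρ : ℝ) (hρ : 0 ≤ ρ) :
    ((1 + ρ • (Hl * Hlᴴ)).det).re ≤ ((1 + ρ • (H * Hᴴ)).det).re := by
  obtain rfl : Hl = homogeneousPart (fun p => (p.1 : ℕ)) (fun q => (q.1 : ℕ) + ℓ) H :=
    Matrix.ext hHl
  exact re_det_one_add_smul_homogeneousPart_le _ ℓ hmax hρ

/-- For a block lower triangular matrix `H` and its last sub-diagonal block matrix `H⁽ℓ⁾`
(retaining only blocks `H_{ij}` with `i - j = ℓ`, where `ℓ` is the largest index for which
such a block is nonzero), `det(I + ρ H H†) ≥ det(I + ρ H⁽ℓ⁾ (H⁽ℓ⁾)†)` for all `ρ ≥ 0`. -/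
theorem stmt_10 (N : ℕ) (sz : Fin N → ℕ)
    (H : Matrix ((i : Fin N) × Fin (sz i)) ((i : Fin N) × Fin (sz i)) ℂ)
    (hblt : ∀ p q : (i : Fin N) × Fin (sz i), p.1 < q.1 → H p q = 0)
    (ℓ : ℕ)
    (hmax : ∀ p q : (i : Fin N) × Fin (sz i), (q.1 : ℕ) + ℓ < (p.1 : ℕ) → H p q = 0)
    (hne : ∃ p q : (i : Fin N) × Fin (sz i), (p.1 : ℕ) = (q.1 : ℕ) + ℓ ∧ H p q ≠ 0)
    (Hl : Matrix ((i : Fin N) × Fin (sz i)) ((i : Fin N) × Fin (sz i)) ℂ)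
    (hHl : ∀ p q : (i : Fin N) × Fin (sz i),
      Hl p q = if (p.1 : ℕ) = (q.1 : ℕ) + ℓ then H p q else 0)
    (ρ : ℝ) (hρ : 0 ≤ ρ) :
    ((1 + ρ • (Hl * Hlᴴ)).det).re ≤ ((1 + ρ • (H * Hᴴ)).det).re :=
  stmt_10_general N sz H ℓ hmax Hl hHl ρ hρ
end
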